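/- Let B be the Gram matrix of Δ⁻_{2n,r} with n ≥ 2 and r ≥ 1. If 2/n + 1/r < 1 then B is nondegenerate and has exactly one positive eigenvalue (it is hyperbolic). -/

import Mathlib

open scoped Matrix

/-- The Gram matrix of `Δ⁻_{2n,r}`: a cycle `v₀, …, v_{2n-1}` with all edges of
multiplicity `1` except the edge `v₀ v_{2n-1}`, which has multiplicity `-1`,
together with an arm `w₀, …, w_{r-1}` with `w_{r-1}` joined to `v₀`; every
vertex has square `-2`. -/
def gramDelta (n r : ℕ) : Matrix (Fin (2 * n) ⊕ Fin r) (Fin (2 * n) ⊕ Fin r) ℝ :=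
  fun a b =>
    match a, b with
    | Sum.inl i, Sum.inl j =>
        if i = j then -2
        else if (i : ℕ) + 1 = (j : ℕ) ∨ (j : ℕ) + 1 = (i : ℕ) then 1
        else if ((i : ℕ) = 0 ∧ (j : ℕ) = 2 * n - 1) ∨ ((j : ℕ) = 0 ∧ (i : ℕ) = 2 * n - 1)
          then -1 else 0
    | Sum.inr j, Sum.inr k =>
        if j = k then -2
        else if (j : ℕ) + 1 = (k : ℕ) ∨ (k : ℕ) + 1 = (j : ℕ) then 1 else 0
    | Sum.inl i, Sum.inr j => if (i : ℕ) = 0 ∧ (j : ℕ) + 1 = r then 1 else 0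
    | Sum.inr j, Sum.inl i => if (i : ℕ) = 0 ∧ (j : ℕ) + 1 = r then 1 else 0

/-!
In coordinates `x = (v, w)` the quadratic form of `gramDelta n r` is
`v₀² - (v₀ + v_{2n-1})² - ∑ (vᵢ - vᵢ₊₁)² - (v₀ - w_{r-1})² - ∑ (wⱼ - wⱼ₊₁)² - w₀²`.
It is therefore negative definite on the hyperplane `v₀ = 0`, so at most one eigenvalue is
nonnegative. The vector that decreases linearly from `v₀` around the cycle, from `n (r + 1)` to
`(1 - n) (r + 1)`, and increases linearly along the arm from `w₀ = n` to `w_{r-1} = r n`, has square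
`n (r + 1) (n r - 2 r - 2)`, positive because `2/n + 1/r < 1` means `n r > 2 r + n`. Hence
exactly one eigenvalue is positive and none vanishes.
-/

open Finset

namespace Matrix.IsHermitian

variable {ι : Type*} [Fintype ι] [DecidableEq ι] {A : Matrix ι ι ℝ} (hA : A.IsHermitian)

theorem dotProduct_mulVec_eigenvectorUnitary_mulVec (y : ι → ℝ) :
    (hA.eigenvectorUnitary : Matrix ι ι ℝ) *ᵥ y ⬝ᵥ
        A *ᵥ ((hA.eigenvectorUnitary : Matrix ι ι ℝ) *ᵥ y)
      = ∑ i, hA.eigenvalues i * y i ^ 2 := by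
  have hUU : (hA.eigenvectorUnitary : Matrix ι ι ℝ)ᵀ * hA.eigenvectorUnitary = 1 := by
    simpa [star_eq_conjTranspose] using Unitary.coe_star_mul_self hA.eigenvectorUnitary
  set U : Matrix ι ι ℝ := ↑hA.eigenvectorUnitary
  conv_lhs => rw [hA.spectral_theorem]
  rw [Unitary.conjStarAlgAut_apply, mulVec_mulVec, mul_assoc, mul_assoc, Unitary.coe_star_mul_self,
    mul_one, ← mulVec_mulVec, dotProduct_mulVec, vecMul_mulVec, hUU, vecMul_one]
  simp only [dotProduct, mulVec_diagonal, Function.comp_apply, RCLike.ofReal_real_eq_id, id]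
  exact sum_congr rfl fun i _ => by ring

theorem exists_eigenvalues_pos_of_dotProduct_mulVec_pos {x : ι → ℝ} (hx : 0 < x ⬝ᵥ A *ᵥ x) :
    ∃ i, 0 < hA.eigenvalues i := by
  set U : Matrix ι ι ℝ := ↑hA.eigenvectorUnitary
  have hx' : x = U *ᵥ (star U *ᵥ x) := by
    rw [mulVec_mulVec, Unitary.mul_star_self_of_mem hA.eigenvectorUnitary.2, one_mulVec]
  rw [hx', dotProduct_mulVec_eigenvectorUnitary_mulVec] at hx
  by_contra! h
  exact hx.not_ge <| sum_nonpos fun i _ => mul_nonpos_of_nonpos_of_nonneg (h i) (sq_nonneg _)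

theorem card_eigenvalues_nonneg_le_one (ℓ : (ι → ℝ) →ₗ[ℝ] ℝ)
    (hneg : ∀ x, x ≠ 0 → ℓ x = 0 → x ⬝ᵥ A *ᵥ x < 0) :
    #{i | 0 ≤ hA.eigenvalues i} ≤ 1 := by
  by_contra! hcard
  obtain ⟨a, ha, b, hb, hab⟩ := one_lt_card.mp hcard
  rw [mem_filter] at ha hb
  set U : Matrix ι ι ℝ := ↑hA.eigenvectorUnitary
  obtain ⟨y, hy0, hℓy, hy⟩ : ∃ y : ι → ℝ, y ≠ 0 ∧ ℓ (U *ᵥ y) = 0 ∧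
      ∀ i, i ≠ a → i ≠ b → y i = 0 := by
    by_cases ha0 : ℓ (U *ᵥ Pi.single a 1) = 0
    · exact ⟨Pi.single a 1, by simp, ha0, fun i hia _ => Pi.single_eq_of_ne hia 1⟩
    refine ⟨ℓ (U *ᵥ Pi.single b 1) • Pi.single a 1 - ℓ (U *ᵥ Pi.single a 1) • Pi.single b 1,
      fun h => ha0 ?_, ?_, fun i hia hib => ?_⟩
    · simpa [Pi.single_eq_of_ne hab.symm] using congrFun h b
    · simp only [mulVec_sub, mulVec_smul, map_sub, map_smul, smul_eq_mul]
      ring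
    · simp [Pi.single_eq_of_ne hia, Pi.single_eq_of_ne hib]
  have hUy : U *ᵥ y ≠ 0 := fun h => hy0 <| by
    rw [← one_mulVec y, ← Unitary.star_mul_self_of_mem hA.eigenvectorUnitary.2, ← mulVec_mulVec]
    exact (congrArg _ h).trans (mulVec_zero _)
  refine (hneg _ hUy hℓy).not_ge ?_
  rw [dotProduct_mulVec_eigenvectorUnitary_mulVec]
  refine sum_nonneg fun i _ => ?_
  by_cases hia : i = a
  · exact hia ▸ mul_nonneg ha.2 (sq_nonneg _)
  by_cases hib : i = b
  · exact hib ▸ mul_nonneg hb.2 (sq_nonneg _)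
  simp [hy i hia hib]

theorem det_ne_zero_and_card_eigenvalues_pos_eq_one (ℓ : (ι → ℝ) →ₗ[ℝ] ℝ)
    (hneg : ∀ x, x ≠ 0 → ℓ x = 0 → x ⬝ᵥ A *ᵥ x < 0) {x : ι → ℝ} (hx : 0 < x ⬝ᵥ A *ᵥ x) :
    A.det ≠ 0 ∧ #{i | 0 < hA.eigenvalues i} = 1 := by
  obtain ⟨p, hp⟩ := hA.exists_eigenvalues_pos_of_dotProduct_mulVec_pos hx
  have huniq : ∀ i, 0 ≤ hA.eigenvalues i → i = p := fun i hi =>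
    card_le_one.mp (hA.card_eigenvalues_nonneg_le_one ℓ hneg) i (by simpa using hi) p
      (by simpa using hp.le)
  refine ⟨?_, card_eq_one.mpr ⟨p, ?_⟩⟩
  · rw [hA.det_eq_prod_eigenvalues]
    refine prod_ne_zero_iff.mpr fun i _ hi => hp.ne' ?_
    obtain rfl := huniq i (by simp_all)
    simpa using hi
  · ext i
    simpa using ⟨fun hi => huniq i hi.le, fun hi => hi ▸ hp⟩

end Matrix.IsHermitian

section FinDoubleSums

variable {M : Type*} [AddCommMonoid M] {m k : ℕ} (c : ℕ → ℕ → M)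

theorem sum_fin_sum_fin_ite_val_eq :
    ∑ i : Fin m, ∑ j : Fin m, (if (i : ℕ) = j then c i j else 0) = ∑ i ∈ range m, c i i := by
  suffices ∑ i ∈ range m, ∑ j ∈ range m, (if i = j then c i j else 0) = ∑ i ∈ range m, c i i by
    simpa only [Finset.sum_range] using this
  simp only [sum_ite_eq, mem_range]
  exact sum_congr rfl fun i hi => if_pos (mem_range.mp hi)

theorem sum_fin_sum_fin_ite_val_succ_eq :
    ∑ i : Fin m, ∑ j : Fin m, (if (i : ℕ) + 1 = j then c i j else 0)
      = ∑ i ∈ range (m - 1), c i (i + 1) := by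
  suffices ∑ i ∈ range m, ∑ j ∈ range m, (if i + 1 = j then c i j else 0)
      = ∑ i ∈ range (m - 1), c i (i + 1) by
    simpa only [Finset.sum_range] using this
  simp only [sum_ite_eq, mem_range]
  rcases m with _ | m
  · simp
  · rw [sum_range_succ, if_neg (by omega), add_zero, Nat.add_sub_cancel]
    exact sum_congr rfl fun i hi => if_pos (by simpa using hi)

theorem sum_fin_sum_fin_ite_val_eq_and_val_eq {a b : ℕ} (ha : a < m) (hb : b < k) :
    ∑ i : Fin m, ∑ j : Fin k, (if (i : ℕ) = a ∧ (j : ℕ) = b then c i j else 0) = c a b := by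
  suffices ∑ i ∈ range m, ∑ j ∈ range k, (if i = a ∧ j = b then c i j else 0) = c a b by
    simpa only [Finset.sum_range] using this
  simp [ite_and, sum_ite_eq', ha, hb]

theorem sum_fin_sum_fin_ite_succ_val_eq :
    ∑ i : Fin m, ∑ j : Fin m, (if (j : ℕ) + 1 = i then c j i else 0)
      = ∑ i ∈ range (m - 1), c i (i + 1) := by
  rw [sum_comm]
  exact sum_fin_sum_fin_ite_val_succ_eq c

end FinDoubleSums

theorem sum_range_sub_succ_sq {R : Type*} [CommRing R] (m : ℕ) (f : ℕ → R) :
    ∑ i ∈ range m, (f i - f (i + 1)) ^ 2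
      = 2 * ∑ i ∈ range (m + 1), f i ^ 2 - f 0 ^ 2 - f m ^ 2
        - 2 * ∑ i ∈ range m, f i * f (i + 1) := by
  induction m with
  | zero => simp; ring
  | succ m ih =>
    rw [sum_range_succ, ih, sum_range_succ (fun i => f i * f (i + 1)),
      sum_range_succ (fun i => f i ^ 2) (m + 1)]
    ring

theorem eq_of_sum_range_sub_succ_sq_eq_zero {R : Type*} [CommRing R] [LinearOrder R]
    [IsStrictOrderedRing R] {m : ℕ} {f : ℕ → R}
    (h : ∑ i ∈ range m, (f i - f (i + 1)) ^ 2 = 0) : ∀ i ≤ m, f i = f 0 := by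
  have hstep := (sum_eq_zero_iff_of_nonneg fun i _ => sq_nonneg (f i - f (i + 1))).mp h
  intro i hi
  induction i with
  | zero => rfl
  | succ i ih =>
    rw [← ih (by omega), eq_comm, ← sub_eq_zero]
    exact pow_eq_zero_iff two_ne_zero |>.mp (hstep i (mem_range.mpr hi))

theorem gramDelta_isHermitian (n r : ℕ) : (gramDelta n r).IsHermitian := by
  ext a b
  cases a <;> cases b <;>
    simp only [Matrix.conjTranspose_apply, gramDelta, star_trivial, Fin.ext_iff] <;>
    split_ifs <;> first | rfl | omega

theorem gramDelta_dotProduct_mulVec_eq_sum {n r : ℕ} (hn : 2 ≤ n) (hr : 1 ≤ r) (f g : ℕ → ℝ) :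
    (Sum.elim (f ∘ Fin.val) (g ∘ Fin.val) : Fin (2 * n) ⊕ Fin r → ℝ) ⬝ᵥ
        gramDelta n r *ᵥ Sum.elim (f ∘ Fin.val) (g ∘ Fin.val)
      = -2 * ∑ i ∈ range (2 * n), f i ^ 2 + 2 * ∑ i ∈ range (2 * n - 1), f i * f (i + 1)
        - 2 * (f 0 * f (2 * n - 1)) + 2 * (f 0 * g (r - 1))
        - 2 * ∑ j ∈ range r, g j ^ 2 + 2 * ∑ j ∈ range (r - 1), g j * g (j + 1) := by
  -- named products, so that the summands take the shape `c ↑i ↑j` of the double-sum lemmas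
  let F : ℕ → ℕ → ℝ := fun a b => f a * f b
  let G : ℕ → ℕ → ℝ := fun a b => g a * g b
  let H : ℕ → ℕ → ℝ := fun a b => f a * g b
  let K : ℕ → ℕ → ℝ := fun a b => g a * f b
  have hvv : ∀ i j : Fin (2 * n), f i * (gramDelta n r (.inl i) (.inl j) * f j)
      = -2 * (if (i : ℕ) = j then F i j else 0) + (if (i : ℕ) + 1 = j then F i j else 0)
        + (if (j : ℕ) + 1 = i then F j i else 0)
        - (if (i : ℕ) = 0 ∧ (j : ℕ) = 2 * n - 1 then F i j else 0)
        - (if (i : ℕ) = 2 * n - 1 ∧ (j : ℕ) = 0 then F i j else 0) := by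
    intro i j
    simp only [gramDelta, Fin.ext_iff, F]
    split_ifs <;> first | ring1 | (exfalso; omega)
  have hww : ∀ j k : Fin r, g j * (gramDelta n r (.inr j) (.inr k) * g k)
      = -2 * (if (j : ℕ) = k then G j k else 0) + (if (j : ℕ) + 1 = k then G j k else 0)
        + (if (k : ℕ) + 1 = j then G k j else 0) := by
    intro j k
    simp only [gramDelta, Fin.ext_iff, G]
    split_ifs <;> first | ring1 | (exfalso; omega)
  have hvw : ∀ (i : Fin (2 * n)) (j : Fin r), f i * (gramDelta n r (.inl i) (.inr j) * g j)
      = if (i : ℕ) = 0 ∧ (j : ℕ) = r - 1 then H i j else 0 := by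
    intro i j
    simp only [gramDelta, H]
    split_ifs <;> first | ring1 | (exfalso; omega)
  have hwv : ∀ (j : Fin r) (i : Fin (2 * n)), g j * (gramDelta n r (.inr j) (.inl i) * f i)
      = if (j : ℕ) = r - 1 ∧ (i : ℕ) = 0 then K j i else 0 := by
    intro j i
    simp only [gramDelta, K]
    split_ifs <;> first | ring1 | (exfalso; omega)
  simp only [dotProduct, Matrix.mulVec, Fintype.sum_sum_type, Sum.elim_inl, Sum.elim_inr,
    Function.comp_apply, mul_add, sum_add_distrib, mul_sum]
  simp only [hvv, hww, hvw, hwv, sum_add_distrib, sum_sub_distrib, ← mul_sum]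
  simp (disch := omega) only [sum_fin_sum_fin_ite_val_eq, sum_fin_sum_fin_ite_val_succ_eq,
    sum_fin_sum_fin_ite_succ_val_eq, sum_fin_sum_fin_ite_val_eq_and_val_eq]
  simp only [F, G, H, K, ← sq]
  ring

theorem gramDelta_dotProduct_mulVec {n r : ℕ} (hn : 2 ≤ n) (hr : 1 ≤ r) (f g : ℕ → ℝ) :
    (Sum.elim (f ∘ Fin.val) (g ∘ Fin.val) : Fin (2 * n) ⊕ Fin r → ℝ) ⬝ᵥ
        gramDelta n r *ᵥ Sum.elim (f ∘ Fin.val) (g ∘ Fin.val)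
      = f 0 ^ 2 - ((f 0 + f (2 * n - 1)) ^ 2 + ∑ i ∈ range (2 * n - 1), (f i - f (i + 1)) ^ 2
        + (f 0 - g (r - 1)) ^ 2 + ∑ j ∈ range (r - 1), (g j - g (j + 1)) ^ 2 + g 0 ^ 2) := by
  have hf := sum_range_sub_succ_sq (2 * n - 1) f
  have hg := sum_range_sub_succ_sq (r - 1) g
  rw [Nat.sub_add_cancel (by omega)] at hf hg
  rw [gramDelta_dotProduct_mulVec_eq_sum hn hr, hf, hg]
  ring

theorem gramDelta_dotProduct_mulVec_neg {n r : ℕ} (hn : 2 ≤ n) (hr : 1 ≤ r)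
    {x : Fin (2 * n) ⊕ Fin r → ℝ} (hx : x ≠ 0) (h0 : x (.inl ⟨0, by omega⟩) = 0) :
    x ⬝ᵥ gramDelta n r *ᵥ x < 0 := by
  set f : ℕ → ℝ := Function.extend Fin.val (x ∘ .inl) 0
  set g : ℕ → ℝ := Function.extend Fin.val (x ∘ .inr) 0
  have hxfg : x = Sum.elim (f ∘ Fin.val) (g ∘ Fin.val) := by
    ext (i | j) <;> simp [f, g, Fin.val_injective.extend_apply]
  have hf0 : f 0 = 0 := by simpa [hxfg] using h0
  rw [hxfg, gramDelta_dotProduct_mulVec hn hr]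
  by_contra! hle
  have hfS := sum_nonneg fun i (_ : i ∈ range (2 * n - 1)) => sq_nonneg (f i - f (i + 1))
  have hgS := sum_nonneg fun j (_ : j ∈ range (r - 1)) => sq_nonneg (g j - g (j + 1))
  have hsq := sq_nonneg (f 0 + f (2 * n - 1))
  have hsq' := sq_nonneg (f 0 - g (r - 1))
  have hsq₀ := sq_nonneg (g 0)
  have hf0' : f 0 ^ 2 = 0 := by simp [hf0]
  have hf := eq_of_sum_range_sub_succ_sq_eq_zero (le_antisymm (by linarith) hfS)
  have hg := eq_of_sum_range_sub_succ_sq_eq_zero (le_antisymm (by linarith) hgS)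
  have hg0 : g 0 = 0 := pow_eq_zero_iff two_ne_zero |>.mp <| le_antisymm (by linarith) hsq₀
  refine hx (hxfg ▸ funext fun a => ?_)
  rcases a with ⟨i, hi⟩ | ⟨j, hj⟩
  · simpa [hf0] using hf i (by omega)
  · simpa [hg0] using hg j (by omega)

theorem gramDelta_exists_dotProduct_mulVec_pos {n r : ℕ} (hn : 2 ≤ n) (hr : 1 ≤ r)
    (h : 2 / (n : ℝ) + 1 / (r : ℝ) < 1) :
    ∃ x : Fin (2 * n) ⊕ Fin r → ℝ, 0 < x ⬝ᵥ gramDelta n r *ᵥ x := by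
  let f : ℕ → ℝ := fun i => (n - i) * (r + 1)
  let g : ℕ → ℝ := fun j => (j + 1) * n
  refine ⟨Sum.elim (f ∘ Fin.val) (g ∘ Fin.val), ?_⟩
  have hcycle : ∑ i ∈ range (2 * n - 1), (f i - f (i + 1)) ^ 2 = (2 * n - 1) * (r + 1) ^ 2 := by
    have hstep : ∀ i, f i - f (i + 1) = r + 1 := fun i => by simp only [f]; push_cast; ring
    simp only [hstep, sum_const, card_range, nsmul_eq_mul]
    push_cast [Nat.cast_sub (by omega : 1 ≤ 2 * n)]
    ring
  have harm : ∑ j ∈ range (r - 1), (g j - g (j + 1)) ^ 2 = (r - 1) * n ^ 2 := by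
    have hstep : ∀ j, g j - g (j + 1) = -n := fun j => by simp only [g]; push_cast; ring
    simp only [hstep, sum_const, card_range, nsmul_eq_mul, neg_sq]
    push_cast [Nat.cast_sub hr]
    ring
  have hnr : 2 * r + n < (n * r : ℝ) := by
    have hn0 : (0 : ℝ) < n := by positivity
    have hr0 : (0 : ℝ) < r := by positivity
    rw [div_add_div _ _ hn0.ne' hr0.ne', div_lt_one (by positivity)] at h
    linarith
  rw [gramDelta_dotProduct_mulVec hn hr, hcycle, harm]
  simp only [f, g, Nat.cast_sub (by omega : 1 ≤ 2 * n), Nat.cast_sub hr]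
  push_cast
  nlinarith

/-- For `n ≥ 2`, `r ≥ 1` with `2/n + 1/r < 1`, the Gram matrix of `Δ⁻_{2n,r}`
is hyperbolic: nondegenerate with exactly one positive eigenvalue. -/
theorem gramDelta_hyperbolic (n r : ℕ) (hn : 2 ≤ n) (hr : 1 ≤ r)
    (h : 2 / (n : ℝ) + 1 / (r : ℝ) < 1) :
    (gramDelta n r).det ≠ 0 ∧
    ∃ hB : (gramDelta n r).IsHermitian,
      (Finset.univ.filter (fun i => 0 < hB.eigenvalues i)).card = 1 := by
  have hB := gramDelta_isHermitian n r
  obtain ⟨x, hx⟩ := gramDelta_exists_dotProduct_mulVec_pos hn hr h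
  let v₀ : (Fin (2 * n) ⊕ Fin r → ℝ) →ₗ[ℝ] ℝ := LinearMap.proj (.inl ⟨0, by omega⟩)
  obtain ⟨hdet, hcard⟩ := hB.det_ne_zero_and_card_eigenvalues_pos_eq_one v₀
    (fun _ hy hy₀ => gramDelta_dotProduct_mulVec_neg hn hr hy hy₀) hx
  exact ⟨hdet, hB, hcard⟩
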